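/- If G is a connected strongly regular graph, then for every t ≥ 0 all columns of the heat kernel H_t = e^{-tL} have equal norm, and hence the graph Gabor system {D_i(t)φ_{λ_j}}_{i,j=1}^N is a tight frame for ℂ^N for every t ≥ 0. -/

import Mathlib

/-!
For a strongly regular graph with adjacency matrix `A`, the span of `I`, `A` and the all-ones
matrix `J` is closed under multiplication (`A² = kI + ℓA + μ(J - I - A)`, `AJ = JA = kJ`,
`J² = NJ`), so it contains every polynomial in `A`, and, being finite-dimensional and hence
closed, also the heat kernel `H = exp(-tL)` with `L = kI - A`. All matrices in this span have
constant diagonal, and the diagonal of `HᴴH = H²` lists the squared column norms of `H`.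
For the Gabor system, unitarity of `Φ` gives
`∑ i, ∑ j, |⟨f, D_i φ_j⟩|² = ∑ k, |f k|² ∑ i, |H k i|²`, and the inner sum is a column norm
of the Hermitian matrix `H`, hence constant and positive since `H` is invertible.
-/

open Matrix
open scoped Pointwise

theorem Matrix.of_one_mul_of_one {n R : Type*} [Fintype n] [NonAssocSemiring R] :
    (of 1 : Matrix n n R) * of 1 = Fintype.card n • of 1 := by
  ext i j
  simp [mul_apply]

namespace SimpleGraph

variable {V : Type*} {G : SimpleGraph V} [DecidableRel G.Adj] {R : Type*} {n k ℓ μ : ℕ}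

section Regular

variable [Fintype V]

theorem IsRegularOfDegree.adjMatrix_mul_of_one [NonAssocSemiring R] (h : G.IsRegularOfDegree k) :
    G.adjMatrix R * of 1 = k • of 1 := by
  ext i j
  simp [adjMatrix_mul_apply, h i]

theorem IsRegularOfDegree.of_one_mul_adjMatrix [NonAssocSemiring R] (h : G.IsRegularOfDegree k) :
    of 1 * G.adjMatrix R = k • of 1 := by
  ext i j
  simp [mul_adjMatrix_apply, h j]

variable [DecidableEq V]

theorem IsRegularOfDegree.lapMatrix_eq [Ring R] (h : G.IsRegularOfDegree k) :
    G.lapMatrix R = k • 1 - G.adjMatrix R := by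
  ext i j
  rcases eq_or_ne i j with rfl | hij
  · simp [lapMatrix, degMatrix, h i, Matrix.natCast_apply]
  · simp [lapMatrix, degMatrix, hij, Matrix.natCast_apply]

theorem IsRegularOfDegree.lapMatrix_mem_adjoin [CommRing R] (h : G.IsRegularOfDegree k) :
    G.lapMatrix R ∈ Algebra.adjoin R {G.adjMatrix R} := by
  rw [h.lapMatrix_eq]
  exact sub_mem (nsmul_mem (one_mem _) k) (Algebra.subset_adjoin rfl)

theorem IsSRGWith.adjMatrix_mul_self [Ring R] (h : G.IsSRGWith n k ℓ μ) :
    G.adjMatrix R * G.adjMatrix R =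
      k • 1 + ℓ • G.adjMatrix R + μ • (of 1 - 1 - G.adjMatrix R) := by
  classical
  rw [← sq, h.matrix_eq, ← compl_adjMatrix_eq_adjMatrix_compl,
    ← G.one_add_adjMatrix_add_compl_adjMatrix_eq_of_one R]
  abel_nf

end Regular

variable [DecidableEq V] [CommRing R]

variable (G R) in
/-- For a strongly regular graph this is its Bose–Mesner algebra. -/
def boseMesnerSpan : Submodule R (Matrix V V R) :=
  Submodule.span R {1, G.adjMatrix R, of 1}

theorem diag_eq_of_mem_boseMesnerSpan {M : Matrix V V R} (hM : M ∈ G.boseMesnerSpan R)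
    (i j : V) : M i i = M j j := by
  induction hM using Submodule.span_induction with
  | mem M hM => rcases hM with rfl | rfl | rfl <;> simp
  | zero => rfl
  | add X Y _ _ hX hY => simp [hX, hY]
  | smul r X _ hX => simp [hX]

variable [Fintype V]

theorem IsSRGWith.mul_mem_boseMesnerSpan (h : G.IsSRGWith n k ℓ μ) {X Y : Matrix V V R}
    (hX : X ∈ G.boseMesnerSpan R) (hY : Y ∈ G.boseMesnerSpan R) :
    X * Y ∈ G.boseMesnerSpan R := by
  have h1 : 1 ∈ G.boseMesnerSpan R := Submodule.subset_span (by simp)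
  have hA : G.adjMatrix R ∈ G.boseMesnerSpan R := Submodule.subset_span (by simp)
  have hJ : (of 1 : Matrix V V R) ∈ G.boseMesnerSpan R := Submodule.subset_span (by simp)
  let s : Set (Matrix V V R) := {1, G.adjMatrix R, of 1}
  have hgen : s * s ⊆ (G.boseMesnerSpan R : Set (Matrix V V R)) := by
    rintro _ ⟨X, hX, Y, hY, rfl⟩
    simp only [s, Set.mem_insert_iff, Set.mem_singleton_iff] at hX hY
    rcases hX with rfl | rfl | rfl <;> rcases hY with rfl | rfl | rfl <;>
      simp only [one_mul, mul_one, h.adjMatrix_mul_self, h.regular.adjMatrix_mul_of_one,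
        h.regular.of_one_mul_adjMatrix, of_one_mul_of_one] <;>
      first
      | assumption
      | exact Submodule.smul_of_tower_mem _ _ hJ
      | exact add_mem (add_mem (Submodule.smul_of_tower_mem _ _ h1)
          (Submodule.smul_of_tower_mem _ _ hA))
          (Submodule.smul_of_tower_mem _ _ (sub_mem (sub_mem hJ h1) hA))
  have hXY := Submodule.mul_mem_mul hX hY
  rw [boseMesnerSpan, Submodule.span_mul_span] at hXY
  exact Submodule.span_le.mpr hgen hXY

theorem IsSRGWith.adjoin_adjMatrix_le (h : G.IsSRGWith n k ℓ μ) :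
    Subalgebra.toSubmodule (Algebra.adjoin R {G.adjMatrix R}) ≤ G.boseMesnerSpan R := by
  intro M hM
  induction hM using Algebra.adjoin_induction with
  | mem M hM => exact Submodule.subset_span (by simp_all)
  | algebraMap r =>
    rw [Algebra.algebraMap_eq_smul_one]
    exact Submodule.smul_mem _ r (Submodule.subset_span (by simp))
  | add X Y _ _ hX hY => exact add_mem hX hY
  | mul X Y _ _ hX hY => exact h.mul_mem_boseMesnerSpan hX hY

theorem IsSRGWith.diag_eq_of_mem_adjoin (h : G.IsSRGWith n k ℓ μ) {M : Matrix V V R}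
    (hM : M ∈ Algebra.adjoin R {G.adjMatrix R}) (i j : V) : M i i = M j j :=
  diag_eq_of_mem_boseMesnerSpan (h.adjoin_adjMatrix_le hM) i j

end SimpleGraph

namespace Matrix

variable {𝕜 m n : Type*} [RCLike 𝕜]

theorem exp_mem_subalgebra [Fintype n] [DecidableEq n] (S : Subalgebra 𝕜 (Matrix n n 𝕜))
    {X : Matrix n n 𝕜} (hX : X ∈ S) : NormedSpace.exp X ∈ S :=
  NormedSpace.exp_mem (s := S)
    (Submodule.closed_of_finiteDimensional (Subalgebra.toSubmodule S)) hX

theorem ofReal_sum_norm_sq [Fintype n] (v : n → 𝕜) :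
    ((∑ i, ‖v i‖ ^ 2 : ℝ) : 𝕜) = star v ⬝ᵥ v := by
  simp [dotProduct, RCLike.conj_mul]

theorem conjTranspose_mul_self_apply_self [Fintype m] (H : Matrix m n 𝕜) (i : n) :
    (Hᴴ * H) i i = ((∑ k, ‖H k i‖ ^ 2 : ℝ) : 𝕜) := by
  rw [ofReal_sum_norm_sq]
  rfl

theorem IsHermitian.sum_norm_sq_row_eq_col [Fintype n] {H : Matrix n n 𝕜} (hH : H.IsHermitian)
    (k : n) :
    ∑ i, ‖H k i‖ ^ 2 = ∑ i, ‖H i k‖ ^ 2 := by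
  conv_lhs => rw [← hH]
  simp

theorem sum_norm_sq_col_pos_of_isUnit [Fintype n] [DecidableEq n] {H : Matrix n n 𝕜}
    (hH : IsUnit H) (i : n) : 0 < ∑ k, ‖H k i‖ ^ 2 := by
  refine lt_of_le_of_ne (by positivity) fun hzero => ?_
  have hcol : ∀ k, H k i = 0 := fun k => by
    simpa using (Finset.sum_eq_zero_iff_of_nonneg (fun k _ => by positivity)).mp hzero.symm k
  exact ((isUnit_iff_isUnit_det H).mp hH).ne_zero (det_eq_zero_of_column_eq_zero i hcol)

theorem sum_norm_sq_mulVec_of_mem_unitaryGroup [Fintype n] [DecidableEq n] {U : Matrix n n 𝕜}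
    (hU : U ∈ unitaryGroup n 𝕜) (v : n → 𝕜) : ∑ i, ‖(U *ᵥ v) i‖ ^ 2 = ∑ i, ‖v i‖ ^ 2 := by
  apply RCLike.ofReal_injective (K := 𝕜)
  rw [ofReal_sum_norm_sq, ofReal_sum_norm_sq, star_mulVec, dotProduct_mulVec, vecMul_vecMul,
    ← star_eq_conjTranspose, mem_unitaryGroup_iff'.mp hU, vecMul_one]

theorem sum_norm_sq_gabor_coeff [Fintype n] [DecidableEq n] {Φ : Matrix n n 𝕜}
    (hΦ : Φ ∈ unitaryGroup n 𝕜) (H : Matrix n n 𝕜) (f : n → 𝕜) :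
    ∑ i, ∑ j, ‖∑ k, f k * starRingEnd 𝕜 ((diagonal (fun k => H k i) *ᵥ fun k => Φ k j) k)‖ ^ 2
      = ∑ k, ‖f k‖ ^ 2 * ∑ i, ‖H k i‖ ^ 2 := by
  have hrow (i : n) : ∑ j, ‖∑ k, f k * starRingEnd 𝕜
      ((diagonal (fun k => H k i) *ᵥ fun k => Φ k j) k)‖ ^ 2
        = ∑ k, ‖f k‖ ^ 2 * ‖H k i‖ ^ 2 := by
    have := sum_norm_sq_mulVec_of_mem_unitaryGroup (Unitary.star_mem hΦ)
      (fun k => f k * starRingEnd 𝕜 (H k i))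
    simp only [mulVec, dotProduct, star_apply, ← starRingEnd_apply, norm_mul, RCLike.norm_conj,
      mul_pow] at this
    rw [← this]
    congr! 3 with j
    simp only [mulVec_diagonal, map_mul]
    exact Finset.sum_congr rfl fun k _ => by ring
  simp_rw [hrow, Finset.mul_sum]
  exact Finset.sum_comm

end Matrix

theorem srg_tight_frame_general {N d a c : ℕ} (G : SimpleGraph (Fin N))
    [DecidableRel G.Adj] (hsrg : G.IsSRGWith N d a c)
    (Φ : Matrix (Fin N) (Fin N) ℂ) (hΦ : Φ ∈ Matrix.unitaryGroup (Fin N) ℂ)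
    (t : ℝ)
    (H : Matrix (Fin N) (Fin N) ℂ)
    (hH : H = NormedSpace.exp ((-t : ℂ) • G.lapMatrix ℂ))
    (ψ : Fin N → Fin N → Fin N → ℂ)
    (hψ : ∀ i j, ψ i j = Matrix.diagonal (fun k => H k i) *ᵥ (fun k => Φ k j)) :
    (∀ i j : Fin N, ∑ k, ‖H k i‖ ^ 2 = ∑ k, ‖H k j‖ ^ 2) ∧
    (∃ A : ℝ, 0 < A ∧ ∀ f : Fin N → ℂ,
      ∑ i, ∑ j, ‖∑ k, f k * (starRingEnd ℂ) (ψ i j k)‖ ^ 2 = A * ∑ k, ‖f k‖ ^ 2) := by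
  have hHerm : H.IsHermitian :=
    hH ▸ ((G.isHermitian_lapMatrix ℂ).smul (by simp [IsSelfAdjoint])).exp
  have hH_mem : H ∈ Algebra.adjoin ℂ {G.adjMatrix ℂ} :=
    hH ▸ exp_mem_subalgebra _ (Subalgebra.smul_mem _ hsrg.regular.lapMatrix_mem_adjoin _)
  have hcol (i j : Fin N) : ∑ k, ‖H k i‖ ^ 2 = ∑ k, ‖H k j‖ ^ 2 := by
    have hdiag := hsrg.diag_eq_of_mem_adjoin (mul_mem (hHerm.symm ▸ hH_mem) hH_mem) i j
    rw [conjTranspose_mul_self_apply_self, conjTranspose_mul_self_apply_self] at hdiag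
    exact_mod_cast hdiag
  refine ⟨hcol, ?_⟩
  rcases isEmpty_or_nonempty (Fin N) with _ | ⟨⟨i₀⟩⟩
  · exact ⟨1, one_pos, fun f => by simp⟩
  refine ⟨_, sum_norm_sq_col_pos_of_isUnit (hH ▸ isUnit_exp _) i₀, fun f => ?_⟩
  simp_rw [hψ, sum_norm_sq_gabor_coeff hΦ, hHerm.sum_norm_sq_row_eq_col, hcol _ i₀,
    ← Finset.sum_mul, mul_comm]

/-- for a connected strongly regular graph, for every `t ≥ 0` all
columns of the heat kernel `H_t = e^{-tL}` have equal norm, and hence the graph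
Gabor system `{D_i(t) φ_j}` is a tight frame for `ℂ^N`. -/
theorem srg_tight_frame {N d a c : ℕ} (G : SimpleGraph (Fin N))
    [DecidableRel G.Adj] (hsrg : G.IsSRGWith N d a c) (hconn : G.Connected)
    (Φ : Matrix (Fin N) (Fin N) ℂ) (hΦ : Φ ∈ Matrix.unitaryGroup (Fin N) ℂ)
    (lam : Fin N → ℝ)
    (heig : ∀ l, G.lapMatrix ℂ *ᵥ (fun i => Φ i l) = (lam l : ℂ) • (fun i => Φ i l))
    (t : ℝ) (ht : 0 ≤ t)
    (H : Matrix (Fin N) (Fin N) ℂ)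
    (hH : H = NormedSpace.exp ((-t : ℂ) • G.lapMatrix ℂ))
    (ψ : Fin N → Fin N → Fin N → ℂ)
    (hψ : ∀ i j, ψ i j = Matrix.diagonal (fun k => H k i) *ᵥ (fun k => Φ k j)) :
    (∀ i j : Fin N, ∑ k, ‖H k i‖ ^ 2 = ∑ k, ‖H k j‖ ^ 2) ∧
    (∃ A : ℝ, 0 < A ∧ ∀ f : Fin N → ℂ,
      ∑ i, ∑ j, ‖∑ k, f k * (starRingEnd ℂ) (ψ i j k)‖ ^ 2 = A * ∑ k, ‖f k‖ ^ 2) :=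
  srg_tight_frame_general G hsrg Φ hΦ t H hH ψ hψ
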